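/- Suppose F is nonempty, p_max ≥ q_max, Q(O) > p_max and ε > 0. Suppose A ⊆ O satisfies p_max < Q(A) ≤ (1+ε)·OPT1 and Q(O \ A) ≤ p_max − ε·OPT1, and B ⊆ O satisfies Q(B) ≤ p_max and Q(B) ≥ (1−ε)·OPT2. Then there exists a feasible schedule π such that makespan(π) < (1+ε)·makespan(σ) for every feasible schedule σ. -/

import Mathlib

/-!
Let `a` be a flow-shop job of maximal length `p = p_a = p_max`, and write `P = P(F)`, `Q = Q(O)`.
In any feasible schedule the load of `M1` forces makespan `≥ P + Q`. On `M2`, a flow-shop job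
processed before `a` either precedes `a` on `M1` as well or is processed on `M2` after `a` has left
`M1`, so `M2` is idle for at least `p` before `a`; by time reversal (which swaps `M1` and `M3`) also
for `p` after `a`. Hence, if `Y` is the set of open-shop jobs processed on `M2` before `a`, the
makespan is at least `P + p + max(p, Q(Y), Q(O \ Y))`, and `max(Q(Y), Q(O \ Y)) ≥ min(OPT1, Q - OPT2)`
by the definitions of `OPT1` and `OPT2`.

Conversely, for every `X ⊆ O` there is a schedule of makespan at most
`max(P + Q, P + p + max(p, Q(X), Q(O \ X)))`: each of the blocks `F`, `X`, `O \ X` is sequenced once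
and processed as a block on every machine, in the orders `F, O \ X, X` on `M1`, `X, F, O \ X` on
`M2` and `O \ X, X, F` on `M3`. One of `X = A`, `X = O \ B` satisfies
`Q(X) ≤ min(OPT1, Q - OPT2) + ε·OPT1` and `Q(O \ X) ≤ p`, and `ε·OPT1 < ε·makespan(σ)` for every
feasible `σ`, since every makespan is at least `P + Q > OPT1`.
-/

open Finset

noncomputable section

/-- Processing time of a job: `p` on flow-shop jobs, `q` otherwise. -/
def jobTime {J : Type*} [DecidableEq J] (F : Finset J) (p q : J → ℝ) (j : J) : ℝ :=
  if j ∈ F then p j else q j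

/-- Feasibility of a schedule given by start times `S j i` of job `j` on machine `i`
(machines `M1, M2, M3` are machines `0, 1, 2`):
all start times are nonnegative, on each machine the open processing intervals of
distinct jobs are pairwise disjoint, for each job the open processing intervals on the
three machines are pairwise disjoint, and each flow-shop job goes through
`M1`, `M2`, `M3` in this order. -/
def Feasible {J : Type*} [DecidableEq J] (F O : Finset J) (p q : J → ℝ)
    (S : J → Fin 3 → ℝ) : Prop :=
  (∀ j ∈ F ∪ O, ∀ i : Fin 3, 0 ≤ S j i) ∧
  (∀ i : Fin 3, ∀ j ∈ F ∪ O, ∀ k ∈ F ∪ O, j ≠ k →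
    S j i + jobTime F p q j ≤ S k i ∨ S k i + jobTime F p q k ≤ S j i) ∧
  (∀ j ∈ F ∪ O, ∀ i i' : Fin 3, i ≠ i' →
    S j i + jobTime F p q j ≤ S j i' ∨ S j i' + jobTime F p q j ≤ S j i) ∧
  (∀ j ∈ F, S j 0 + p j ≤ S j 1 ∧ S j 1 + p j ≤ S j 2)

/-- Makespan: supremum of all completion times of the jobs of `F ∪ O`. -/
def makespan {J : Type*} [DecidableEq J] (F O : Finset J) (p q : J → ℝ)
    (S : J → Fin 3 → ℝ) : ℝ :=
  sSup {x : ℝ | ∃ j ∈ F ∪ O, ∃ i : Fin 3, x = S j i + jobTime F p q j}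

section NoOverlap

variable {ι : Type*}

def NoOverlap (s t : ι → ℝ) (j k : ι) : Prop :=
  s j + t j ≤ s k ∨ s k + t k ≤ s j

instance (s t : ι → ℝ) : Std.Symm (NoOverlap s t) := ⟨fun _ _ => Or.symm⟩

theorem NoOverlap.reflect {s t : ι → ℝ} {j k : ι} (h : NoOverlap s t j k) :
    NoOverlap (fun j => -(s j + t j)) t j k := by
  rcases h with h | h
  · right; linarith
  · left; linarith

open MeasureTheory in
theorem sum_le_sub_of_pairwise_noOverlap {S : Finset ι} {s t : ι → ℝ} {a b : ℝ}
    (hS : (S : Set ι).Pairwise (NoOverlap s t)) (ht : ∀ j ∈ S, 0 ≤ t j) (hab : a ≤ b)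
    (hs : ∀ j ∈ S, a ≤ s j ∧ s j + t j ≤ b) : ∑ j ∈ S, t j ≤ b - a := by
  have hdisj : (S : Set ι).PairwiseDisjoint fun j => Set.Ioo (s j) (s j + t j) := by
    intro j hj k hk hjk
    refine Set.Ioo_disjoint_Ioo.mpr ?_
    rcases hS hj hk hjk with h | h
    · exact (min_le_left _ _).trans (h.trans (le_max_right _ _))
    · exact (min_le_right _ _).trans (h.trans (le_max_left _ _))
  have hsub : (⋃ j ∈ S, Set.Ioo (s j) (s j + t j)) ⊆ Set.Icc a b :=
    Set.iUnion₂_subset fun j hj =>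
      Set.Ioo_subset_Icc_self.trans (Set.Icc_subset_Icc (hs j hj).1 (hs j hj).2)
  have hvol := measure_mono (μ := volume) hsub
  rw [measure_biUnion_finset hdisj fun _ _ => measurableSet_Ioo, Real.volume_Icc] at hvol
  simp_rw [Real.volume_Ioo, add_sub_cancel_left] at hvol
  rwa [← ENNReal.ofReal_sum_of_nonneg ht, ENNReal.ofReal_le_ofReal_iff (sub_nonneg.2 hab)] at hvol

/-- The jobs that also precede `a` on `u` fit into `[L, u a]`, the others run on `v` inside
`[u a + t a, v a]`. -/
theorem sum_le_of_pairwise_noOverlap_of_precedes {S : Finset ι} {u v t : ι → ℝ} {a : ι} {L : ℝ}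
    (hu : (S : Set ι).Pairwise (NoOverlap u t)) (hua : ∀ j ∈ S, NoOverlap u t j a)
    (hv : (S : Set ι).Pairwise (NoOverlap v t)) (ht : ∀ j ∈ S, 0 ≤ t j)
    (hL : ∀ j ∈ S, L ≤ u j) (hLa : L ≤ u a)
    (hflow : ∀ j ∈ S, u j + t j ≤ v j) (hflowa : u a + t a ≤ v a)
    (hpre : ∀ j ∈ S, v j + t j ≤ v a) :
    ∑ j ∈ S, t j ≤ v a - t a - L := by
  rw [← sum_filter_add_sum_filter_not S (fun j => u j + t j ≤ u a)]
  have hfirst : ∑ j ∈ S with u j + t j ≤ u a, t j ≤ u a - L :=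
    sum_le_sub_of_pairwise_noOverlap (hu.mono (coe_subset.2 (filter_subset _ S)))
      (fun j hj => ht j (mem_filter.1 hj).1) hLa
      fun j hj => ⟨hL j (mem_filter.1 hj).1, (mem_filter.1 hj).2⟩
  have hsecond : ∑ j ∈ S with ¬u j + t j ≤ u a, t j ≤ v a - (u a + t a) :=
    sum_le_sub_of_pairwise_noOverlap (hv.mono (coe_subset.2 (filter_subset _ S)))
      (fun j hj => ht j (mem_filter.1 hj).1) hflowa fun j hj => by
        obtain ⟨hjS, hj⟩ := mem_filter.1 hj
        have hafter : u a + t a ≤ u j := (hua j hjS).resolve_left hj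
        exact ⟨by linarith [ht j hjS, hflow j hjS], hpre j hjS⟩
  linarith

theorem exists_pairwise_noOverlap_le_sum (S : Finset ι) {t : ι → ℝ} (ht : ∀ j ∈ S, 0 ≤ t j) :
    ∃ b : ι → ℝ, (∀ j ∈ S, 0 ≤ b j ∧ b j + t j ≤ ∑ k ∈ S, t k) ∧
      (S : Set ι).Pairwise (NoOverlap b t) := by
  classical
  induction S using Finset.induction_on with
  | empty => exact ⟨0, by simp, by simp⟩
  | insert a S haS ih =>
    obtain ⟨b, hb, hB⟩ := ih fun j hj => ht j (mem_insert_of_mem hj)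
    have hS0 : 0 ≤ ∑ k ∈ S, t k := sum_nonneg fun j hj => ht j (mem_insert_of_mem hj)
    have hta := ht a (mem_insert_self a S)
    have hba : ∀ j ∈ S, Function.update b a (∑ k ∈ S, t k) j = b j :=
      fun j hj => Function.update_of_ne (ne_of_mem_of_not_mem hj haS) _ _
    refine ⟨Function.update b a (∑ k ∈ S, t k), fun j hj => ?_, ?_⟩
    · rw [sum_insert haS]
      rcases mem_insert.1 hj with rfl | hj
      · simp only [Function.update_self]; constructor <;> linarith
      · rw [hba j hj]; have := hb j hj; constructor <;> linarith
    · rw [coe_insert, Set.pairwise_insert_of_symm]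
      refine ⟨fun j hj k hk hjk => ?_, fun k hk _ => Or.inr ?_⟩
      · simpa only [NoOverlap, hba j hj, hba k hk] using hB hj hk hjk
      · rw [hba k hk, Function.update_self]; exact (hb k hk).2

theorem pairwise_noOverlap_of_chain {κ : Type*} {s w : κ → ℝ} {a b c : κ}
    (hcover : ∀ K, K = a ∨ K = b ∨ K = c) (hab : s a + w a ≤ s b) (hbc : s b + w b ≤ s c)
    (hw : 0 ≤ w b) : Pairwise (NoOverlap s w) := by
  intro K K' hne
  rcases hcover K with rfl | rfl | rfl <;> rcases hcover K' with rfl | rfl | rfl <;>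
    first | exact absurd rfl hne | (left; linarith) | (right; linarith)

theorem pairwise_noOverlap_of_blocks {κ : Type*} {S : Finset ι} {jobs : κ → Finset ι}
    {blk : ι → κ} {b : κ → ι → ℝ} {c T : κ → ℝ} {t : ι → ℝ}
    (hS : ∀ j ∈ S, j ∈ jobs (blk j)) (hb : ∀ K, ∀ j ∈ jobs K, 0 ≤ b K j ∧ b K j + t j ≤ T K)
    (hB : ∀ K, (jobs K : Set ι).Pairwise (NoOverlap (b K) t)) (hwin : Pairwise (NoOverlap c T)) :
    (S : Set ι).Pairwise (NoOverlap (fun j => c (blk j) + b (blk j) j) t) := by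
  intro j hj k hk hjk
  by_cases hK : blk j = blk k
  · have hjk' := hB (blk k) (hK ▸ hS j hj) (hS k hk) hjk
    simp only [NoOverlap, hK] at hjk' ⊢
    exact hjk'.imp (fun h => by linarith) fun h => by linarith
  · have hbj := hb _ j (hS j hj)
    have hbk := hb _ k (hS k hk)
    exact (hwin hK).imp (fun h => by linarith) fun h => by linarith

end NoOverlap

section Shop

variable {J : Type*} [DecidableEq J] {F O : Finset J} {p q : J → ℝ}

theorem jobTime_of_mem_flow {j : J} (hj : j ∈ F) : jobTime F p q j = p j := if_pos hj

theorem jobTime_of_mem_open (hdisj : Disjoint F O) {j : J} (hj : j ∈ O) :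
    jobTime F p q j = q j :=
  if_neg (disjoint_right.1 hdisj hj)

theorem jobTime_nonneg (hdisj : Disjoint F O) (hp : ∀ j ∈ F, 0 ≤ p j) (hq : ∀ j ∈ O, 0 ≤ q j) :
    ∀ j ∈ F ∪ O, 0 ≤ jobTime F p q j := by
  intro j hj
  rcases mem_union.1 hj with hj | hj
  · rw [jobTime_of_mem_flow hj]; exact hp j hj
  · rw [jobTime_of_mem_open hdisj hj]; exact hq j hj

theorem sum_jobTime_of_subset_flow {S : Finset J} (hS : S ⊆ F) :
    ∑ j ∈ S, jobTime F p q j = ∑ j ∈ S, p j :=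
  sum_congr rfl fun _ hj => jobTime_of_mem_flow (hS hj)

theorem sum_jobTime_of_subset_open (hdisj : Disjoint F O) {S : Finset J} (hS : S ⊆ O) :
    ∑ j ∈ S, jobTime F p q j = ∑ j ∈ S, q j :=
  sum_congr rfl fun _ hj => jobTime_of_mem_open hdisj (hS hj)

theorem sum_jobTime_union (hdisj : Disjoint F O) :
    ∑ j ∈ F ∪ O, jobTime F p q j = ∑ j ∈ F, p j + ∑ j ∈ O, q j := by
  rw [sum_union hdisj, sum_jobTime_of_subset_flow subset_rfl,
    sum_jobTime_of_subset_open hdisj subset_rfl]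

theorem le_makespan (σ : J → Fin 3 → ℝ) {j : J} (hj : j ∈ F ∪ O) (i : Fin 3) :
    σ j i + jobTime F p q j ≤ makespan F O p q σ := by
  refine le_csSup ?_ ⟨j, hj, i, rfl⟩
  refine ((((F ∪ O) ×ˢ (univ : Finset (Fin 3))).image
    fun x => σ x.1 x.2 + jobTime F p q x.1).bddAbove).mono ?_
  rintro x ⟨j, hj, i, rfl⟩
  exact mem_coe.2 (mem_image.2 ⟨(j, i), mem_product.2 ⟨hj, mem_univ i⟩, rfl⟩)

theorem makespan_le {σ : J → Fin 3 → ℝ} {U : ℝ} (hU : 0 ≤ U)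
    (h : ∀ j ∈ F ∪ O, ∀ i, σ j i + jobTime F p q j ≤ U) : makespan F O p q σ ≤ U :=
  Real.sSup_le (by rintro x ⟨j, hj, i, rfl⟩; exact h j hj i) hU

namespace Feasible

variable {σ : J → Fin 3 → ℝ}

theorem pairwise_noOverlap (hσ : Feasible F O p q σ) (i : Fin 3) :
    ((F ∪ O : Finset J) : Set J).Pairwise (NoOverlap (fun j => σ j i) (jobTime F p q)) :=
  fun j hj k hk => hσ.2.1 i j hj k hk

theorem sum_le_sub (hσ : Feasible F O p q σ) (ht : ∀ j ∈ F ∪ O, 0 ≤ jobTime F p q j)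
    {S : Finset J} (hS : S ⊆ F ∪ O) (i : Fin 3) {a b : ℝ} (hab : a ≤ b)
    (hwin : ∀ j ∈ S, a ≤ σ j i ∧ σ j i + jobTime F p q j ≤ b) :
    ∑ j ∈ S, jobTime F p q j ≤ b - a :=
  sum_le_sub_of_pairwise_noOverlap ((hσ.pairwise_noOverlap i).mono (coe_subset.2 hS))
    (fun j hj => ht j (hS hj)) hab hwin

theorem makespan_nonneg (hσ : Feasible F O p q σ) (ht : ∀ j ∈ F ∪ O, 0 ≤ jobTime F p q j) :
    0 ≤ makespan F O p q σ :=
  Real.sSup_nonneg <| by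
    rintro x ⟨j, hj, i, rfl⟩
    exact add_nonneg (hσ.1 j hj i) (ht j hj)

theorem sum_add_sum_le_makespan (hσ : Feasible F O p q σ) (hdisj : Disjoint F O)
    (hp : ∀ j ∈ F, 0 ≤ p j) (hq : ∀ j ∈ O, 0 ≤ q j) :
    ∑ j ∈ F, p j + ∑ j ∈ O, q j ≤ makespan F O p q σ := by
  have ht := jobTime_nonneg hdisj hp hq
  rw [← sum_jobTime_union hdisj, ← sub_zero (makespan F O p q σ)]
  exact hσ.sum_le_sub ht subset_rfl 0 (hσ.makespan_nonneg ht)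
    fun j hj => ⟨hσ.1 j hj 0, le_makespan σ hj 0⟩

theorem sum_le_of_precedes (hσ : Feasible F O p q σ) (ht : ∀ j ∈ F ∪ O, 0 ≤ jobTime F p q j)
    {a : J} (ha : a ∈ F) {S : Finset J} (hS : S ⊆ F.erase a)
    (hpre : ∀ j ∈ S, σ j 1 + jobTime F p q j ≤ σ a 1) :
    ∑ j ∈ S, jobTime F p q j ≤ σ a 1 - jobTime F p q a := by
  have hSF : S ⊆ F := hS.trans (erase_subset a F)
  have hSFO : S ⊆ F ∪ O := hSF.trans subset_union_left
  have haFO : a ∈ F ∪ O := mem_union_left O ha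
  have hne : ∀ j ∈ S, j ≠ a := fun j hj => ne_of_mem_erase (hS hj)
  have hflow : ∀ j ∈ F, σ j 0 + jobTime F p q j ≤ σ j 1 := fun j hj =>
    (jobTime_of_mem_flow hj).symm ▸ (hσ.2.2.2 j hj).1
  simpa using sum_le_of_pairwise_noOverlap_of_precedes
    ((hσ.pairwise_noOverlap 0).mono (coe_subset.2 hSFO))
    (fun j hj => hσ.pairwise_noOverlap 0 (hSFO hj) haFO (hne j hj))
    ((hσ.pairwise_noOverlap 1).mono (coe_subset.2 hSFO)) (fun j hj => ht j (hSFO hj))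
    (fun j hj => hσ.1 j (hSFO hj) 0) (hσ.1 a haFO 0)
    (fun j hj => hflow j (hSF hj)) (hflow a ha) hpre

/-- The time reversal `s ↦ -(s + t)`, which swaps `M1` and `M3`, turns this into
`sum_le_of_precedes`. -/
theorem sum_le_of_succeeds (hσ : Feasible F O p q σ) (ht : ∀ j ∈ F ∪ O, 0 ≤ jobTime F p q j)
    {a : J} (ha : a ∈ F) {S : Finset J} (hS : S ⊆ F.erase a)
    (hsucc : ∀ j ∈ S, σ a 1 + jobTime F p q a ≤ σ j 1) :
    ∑ j ∈ S, jobTime F p q j ≤ makespan F O p q σ - σ a 1 - 2 * jobTime F p q a := by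
  have hSF : S ⊆ F := hS.trans (erase_subset a F)
  have hSFO : S ⊆ F ∪ O := hSF.trans subset_union_left
  have haFO : a ∈ F ∪ O := mem_union_left O ha
  have hne : ∀ j ∈ S, j ≠ a := fun j hj => ne_of_mem_erase (hS hj)
  have hflow : ∀ j ∈ F, σ j 1 + jobTime F p q j ≤ σ j 2 := fun j hj =>
    (jobTime_of_mem_flow hj).symm ▸ (hσ.2.2.2 j hj).2
  have := sum_le_of_pairwise_noOverlap_of_precedes (L := -makespan F O p q σ)
    (u := fun j => -(σ j 2 + jobTime F p q j)) (v := fun j => -(σ j 1 + jobTime F p q j))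
    (((hσ.pairwise_noOverlap 2).mono (coe_subset.2 hSFO)).mono' fun _ _ => NoOverlap.reflect)
    (fun j hj => (hσ.pairwise_noOverlap 2 (hSFO hj) haFO (hne j hj)).reflect)
    (((hσ.pairwise_noOverlap 1).mono (coe_subset.2 hSFO)).mono' fun _ _ => NoOverlap.reflect)
    (fun j hj => ht j (hSFO hj))
    (fun j hj => neg_le_neg (le_makespan σ (hSFO hj) 2))
    (neg_le_neg (le_makespan σ haFO 2))
    (fun j hj => by linarith [hflow j (hSF hj)]) (by linarith [hflow a ha])
    (fun j hj => by linarith [hsucc j hj])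
  linarith

theorem exists_makespan_lower_bounds (hσ : Feasible F O p q σ) (hdisj : Disjoint F O)
    (hp : ∀ j ∈ F, 0 ≤ p j) (hq : ∀ j ∈ O, 0 ≤ q j) {a : J} (ha : a ∈ F) :
    ∃ Y ⊆ O, ∑ j ∈ F, p j + p a + max (p a) (max (∑ j ∈ Y, q j) (∑ j ∈ O \ Y, q j)) ≤
      makespan F O p q σ := by
  have ht := jobTime_nonneg hdisj hp hq
  have haFO : a ∈ F ∪ O := mem_union_left O ha
  have hsucc : ∀ j ∈ F ∪ O, j ≠ a → ¬σ j 1 + jobTime F p q j ≤ σ a 1 →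
      σ a 1 + jobTime F p q a ≤ σ j 1 :=
    fun j hj hja => (hσ.pairwise_noOverlap 1 hj haFO hja).resolve_left
  set Fb := {j ∈ F.erase a | σ j 1 + jobTime F p q j ≤ σ a 1}
  set Y := {j ∈ O | σ j 1 + jobTime F p q j ≤ σ a 1}
  have hFbF : Fb ⊆ F := (filter_subset _ _).trans (erase_subset a F)
  have hFaF : F.erase a \ Fb ⊆ F := sdiff_subset.trans (erase_subset a F)
  have hbefore : Fb ∪ Y ⊆ F ∪ O := union_subset_union hFbF (filter_subset _ O)
  have hafter : (F.erase a \ Fb) ∪ (O \ Y) ⊆ F ∪ O := union_subset_union hFaF sdiff_subset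
  have hsuccF : ∀ j ∈ F.erase a \ Fb, σ a 1 + jobTime F p q a ≤ σ j 1 := fun j hj => by
    obtain ⟨hj, hjb⟩ := mem_sdiff.1 hj
    exact hsucc j (mem_union_left O (mem_of_mem_erase hj)) (ne_of_mem_erase hj)
      fun h => hjb (mem_filter.2 ⟨hj, h⟩)
  have hsuccO : ∀ j ∈ O \ Y, σ a 1 + jobTime F p q a ≤ σ j 1 := fun j hj => by
    obtain ⟨hj, hjY⟩ := mem_sdiff.1 hj
    exact hsucc j (mem_union_right F hj) (fun h => disjoint_left.1 hdisj (h ▸ ha) hj)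
      fun h => hjY (mem_filter.2 ⟨hj, h⟩)
  have hFb := hσ.sum_le_of_precedes ht ha (filter_subset _ _) fun j hj => (mem_filter.1 hj).2
  have hFa := hσ.sum_le_of_succeeds ht ha sdiff_subset hsuccF
  have hM2before := hσ.sum_le_sub ht hbefore 1 (hσ.1 a haFO 1) fun j hj =>
    ⟨hσ.1 j (hbefore hj) 1, by rcases mem_union.1 hj with hj | hj <;> exact (mem_filter.1 hj).2⟩
  have hM2after := hσ.sum_le_sub ht hafter 1 (le_makespan σ haFO 1) fun j hj =>
    ⟨(mem_union.1 hj).elim (hsuccF j) (hsuccO j), le_makespan σ (hafter hj) 1⟩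
  have hF : ∑ j ∈ F, jobTime F p q j =
      jobTime F p q a + ∑ j ∈ Fb, jobTime F p q j + ∑ j ∈ F.erase a \ Fb, jobTime F p q j := by
    rw [add_assoc, add_comm (∑ j ∈ Fb, _), sum_sdiff (filter_subset _ _), add_sum_erase F _ ha]
  rw [sum_union (hdisj.mono hFbF (filter_subset _ O)),
    sum_jobTime_of_subset_open hdisj (filter_subset _ O)] at hM2before
  rw [sum_union (hdisj.mono hFaF sdiff_subset),
    sum_jobTime_of_subset_open hdisj sdiff_subset] at hM2after
  rw [sum_jobTime_of_subset_flow subset_rfl] at hF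
  have hta : jobTime F p q a = p a := jobTime_of_mem_flow ha
  refine ⟨Y, filter_subset _ O, ?_⟩
  have : max (p a) (max (∑ j ∈ Y, q j) (∑ j ∈ O \ Y, q j)) ≤
      makespan F O p q σ - ∑ j ∈ F, p j - p a :=
    max_le (by linarith) (max_le (by linarith) (by linarith))
  linarith

end Feasible

theorem exists_feasible_of_blocks {κ : Type*} {jobs : κ → Finset J} {blk : J → κ}
    {c : κ → Fin 3 → ℝ} {T : κ → ℝ} {U : ℝ}
    (ht : ∀ K, ∀ j ∈ jobs K, 0 ≤ jobTime F p q j) (hjobs : ∀ j ∈ F ∪ O, j ∈ jobs (blk j))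
    (hT : ∀ K, ∑ j ∈ jobs K, jobTime F p q j ≤ T K) (hc : ∀ K i, 0 ≤ c K i)
    (hcol : ∀ i, Pairwise (NoOverlap (fun K => c K i) T))
    (hrow : ∀ j ∈ F ∪ O, Pairwise (NoOverlap (c (blk j)) fun _ => jobTime F p q j))
    (hflow : ∀ j ∈ F, c (blk j) 0 + p j ≤ c (blk j) 1 ∧ c (blk j) 1 + p j ≤ c (blk j) 2)
    (hU : 0 ≤ U) (hend : ∀ K i, c K i + T K ≤ U) :
    ∃ π, Feasible F O p q π ∧ makespan F O p q π ≤ U := by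
  choose b hb hB using fun K => exists_pairwise_noOverlap_le_sum (jobs K) (ht K)
  replace hb : ∀ K, ∀ j ∈ jobs K, 0 ≤ b K j ∧ b K j + jobTime F p q j ≤ T K :=
    fun K j hj => ⟨(hb K j hj).1, (hb K j hj).2.trans (hT K)⟩
  refine ⟨fun j i => c (blk j) i + b (blk j) j, ⟨?_, ?_, ?_, ?_⟩, ?_⟩
  · exact fun j hj i => add_nonneg (hc _ _) (hb _ j (hjobs j hj)).1
  · exact fun i => pairwise_noOverlap_of_blocks hjobs hb hB (hcol i)
  · exact fun j hj i i' hii' =>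
      (hrow j hj hii').imp (fun h => by linarith) fun h => by linarith
  · exact fun j hj => ⟨by linarith [(hflow j hj).1], by linarith [(hflow j hj).2]⟩
  · exact makespan_le hU fun j hj i => by linarith [hend (blk j) i, (hb _ j (hjobs j hj)).2]

/-- The blocks `F`, `X`, `O \ X` are the rows of `c`, the machines its columns. -/
theorem exists_feasible_of_split (hdisj : Disjoint F O) (hp : ∀ j ∈ F, 0 ≤ p j)
    (hq : ∀ j ∈ O, 0 ≤ q j) {X : Finset J} (hXO : X ⊆ O) {pm U : ℝ}
    (hpF : ∀ j ∈ F, p j ≤ pm) (hqO : ∀ j ∈ O, q j ≤ pm) {c : Matrix (Fin 3) (Fin 3) ℝ}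
    (hc : ∀ K i, 0 ≤ c K i)
    (hcol : ∀ i, Pairwise
      (NoOverlap (fun K => c K i) ![∑ j ∈ F, p j, ∑ j ∈ X, q j, ∑ j ∈ O \ X, q j]))
    (hrow : ∀ K w, 0 ≤ w → w ≤ pm → Pairwise (NoOverlap (c K) fun _ => w))
    (hflow : c 0 0 + pm ≤ c 0 1 ∧ c 0 1 + pm ≤ c 0 2) (hU : 0 ≤ U)
    (hend : ∀ K i, c K i + ![∑ j ∈ F, p j, ∑ j ∈ X, q j, ∑ j ∈ O \ X, q j] K ≤ U) :
    ∃ π, Feasible F O p q π ∧ makespan F O p q π ≤ U := by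
  have ht := jobTime_nonneg hdisj hp hq
  have hjobs : ∀ K, ![F, X, O \ X] K ⊆ F ∪ O := by
    intro K; fin_cases K
    · exact subset_union_left
    · exact hXO.trans subset_union_right
    · exact sdiff_subset.trans subset_union_right
  have htpm : ∀ j ∈ F ∪ O, jobTime F p q j ≤ pm := by
    intro j hj
    rcases mem_union.1 hj with hj | hj
    · rw [jobTime_of_mem_flow hj]; exact hpF j hj
    · rw [jobTime_of_mem_open hdisj hj]; exact hqO j hj
  refine exists_feasible_of_blocks (blk := fun j => if j ∈ F then 0 else if j ∈ X then 1 else 2)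
    (fun K j hj => ht j (hjobs K hj)) (fun j hj => ?_) (fun K => ?_) hc hcol
    (fun j hj => hrow _ _ (ht j hj) (htpm j hj)) (fun j hj => ?_) hU hend
  · by_cases hjF : j ∈ F
    · simp [hjF]
    by_cases hjX : j ∈ X
    · simp [hjF, hjX]
    · simpa [hjF, hjX] using (mem_union.1 hj).resolve_left hjF
  · fin_cases K
    · exact (sum_jobTime_of_subset_flow subset_rfl).le
    · exact (sum_jobTime_of_subset_open hdisj hXO).le
    · exact (sum_jobTime_of_subset_open hdisj sdiff_subset).le
  · simp only [hj, if_true]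
    constructor <;> linarith [hpF j hj]

theorem exists_feasible_makespan_le (hdisj : Disjoint F O) (hp : ∀ j ∈ F, 0 ≤ p j)
    (hq : ∀ j ∈ O, 0 ≤ q j) {X : Finset J} (hXO : X ⊆ O) {pm : ℝ}
    (hpF : ∀ j ∈ F, p j ≤ pm) (hqO : ∀ j ∈ O, q j ≤ pm) (hpm : pm ≤ ∑ j ∈ F, p j) :
    ∃ π, Feasible F O p q π ∧ makespan F O p q π ≤ max (∑ j ∈ F, p j + ∑ j ∈ O, q j)
      (∑ j ∈ F, p j + pm + max pm (max (∑ j ∈ X, q j) (∑ j ∈ O \ X, q j))) := by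
  set P := ∑ j ∈ F, p j with hPdef
  set QX := ∑ j ∈ X, q j with hQXdef
  set QY := ∑ j ∈ O \ X, q j with hQYdef
  set U := max (P + ∑ j ∈ O, q j) (P + pm + max pm (max QX QY))
  have hQ : ∑ j ∈ O, q j = QX + QY := by rw [← sum_sdiff hXO, add_comm]
  have hP : 0 ≤ P := sum_nonneg hp
  have hQX : 0 ≤ QX := sum_nonneg fun j hj => hq j (hXO hj)
  have hQY : 0 ≤ QY := sum_nonneg fun j hj => hq j (sdiff_subset hj)
  have hU : P + QX + QY ≤ U := by rw [add_assoc, ← hQ]; exact le_max_left _ _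
  have hU' : P + pm + max pm (max QX QY) ≤ U := le_max_right _ _
  have := le_max_left pm (max QX QY)
  have := (le_max_left QX QY).trans (le_max_right pm _)
  have := (le_max_right QX QY).trans (le_max_right pm _)
  set d := max QX pm
  set e := max QY pm
  have hd : QX ≤ d ∧ pm ≤ d ∧ d ≤ U - P - pm ∧ d ≤ U - P - QY :=
    ⟨le_max_left _ _, le_max_right _ _, max_le (by linarith) (by linarith),
      max_le (by linarith) (by linarith)⟩
  have he : QY ≤ e ∧ pm ≤ e ∧ e ≤ U - P - QX :=
    ⟨le_max_left _ _, le_max_right _ _, max_le (by linarith) (by linarith)⟩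
  refine exists_feasible_of_split hdisj hp hq hXO hpF hqO
    (c := !![0, d, U - P; U - QX, 0, e; P, d + P, 0]) (fun K i => ?_) (fun i => ?_)
    (fun K w hw hwpm => ?_) ⟨by simp; linarith, by simp; linarith⟩ (by linarith) (fun K i => ?_)
  · fin_cases K <;> fin_cases i <;> simp <;> linarith
  · fin_cases i
    · exact pairwise_noOverlap_of_chain (a := 0) (b := 2) (c := 1) (by decide)
        (by simp; linarith) (by simp; linarith) (by simpa using hQY)
    · exact pairwise_noOverlap_of_chain (a := 1) (b := 0) (c := 2) (by decide)
        (by simp; linarith) (by simp; linarith) (by simpa using hP)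
    · exact pairwise_noOverlap_of_chain (a := 2) (b := 1) (c := 0) (by decide)
        (by simp; linarith) (by simp; linarith) (by simpa using hQX)
  · fin_cases K
    · exact pairwise_noOverlap_of_chain (a := 0) (b := 1) (c := 2) (by decide)
        (by simp; linarith) (by simp; linarith) hw
    · exact pairwise_noOverlap_of_chain (a := 1) (b := 2) (c := 0) (by decide)
        (by simp; linarith) (by simp; linarith) hw
    · exact pairwise_noOverlap_of_chain (a := 2) (b := 0) (c := 1) (by decide)
        (by simp; linarith) (by simp; linarith) hw
  · fin_cases K <;> fin_cases i <;> simp <;> linarith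

end Shop

section Knapsack

variable {J : Type*} [DecidableEq J] {O : Finset J} {q : J → ℝ} {c OPT₁ OPT₂ : ℝ}

theorem min_le_max_sum_sum_sdiff
    (hOPT₁ : OPT₁ ∈ lowerBounds {x | ∃ X ⊆ O, x = ∑ j ∈ X, q j ∧ c < x})
    (hOPT₂ : OPT₂ ∈ upperBounds {x | ∃ Y ⊆ O, x = ∑ j ∈ Y, q j ∧ x ≤ c})
    {Y : Finset J} (hY : Y ⊆ O) :
    min OPT₁ (∑ j ∈ O, q j - OPT₂) ≤ max (∑ j ∈ Y, q j) (∑ j ∈ O \ Y, q j) := by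
  rw [sum_sdiff_eq_sub hY]
  by_cases hYc : ∑ j ∈ Y, q j ≤ c
  · have := hOPT₂ ⟨Y, hY, rfl, hYc⟩
    exact (min_le_right _ _).trans (le_max_of_le_right (by linarith))
  · exact (min_le_left _ _).trans (le_max_of_le_left (hOPT₁ ⟨Y, hY, rfl, not_le.1 hYc⟩))

theorem exists_subset_sum_le_of_approx {ε : ℝ} (hε : 0 ≤ ε) (hOPT : OPT₂ ≤ OPT₁)
    {A : Finset J} (hAO : A ⊆ O) (hA₁ : ∑ j ∈ A, q j ≤ (1 + ε) * OPT₁)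
    (hA₂ : ∑ j ∈ O \ A, q j ≤ c)
    {B : Finset J} (hBO : B ⊆ O) (hB₁ : ∑ j ∈ B, q j ≤ c)
    (hB₂ : (1 - ε) * OPT₂ ≤ ∑ j ∈ B, q j) :
    ∃ X ⊆ O, ∑ j ∈ X, q j ≤ min OPT₁ (∑ j ∈ O, q j - OPT₂) + ε * OPT₁ ∧
      ∑ j ∈ O \ X, q j ≤ c := by
  have hεOPT : ε * OPT₂ ≤ ε * OPT₁ := mul_le_mul_of_nonneg_left hOPT hε
  rw [← min_add_add_right]
  by_cases hAB : ∑ j ∈ A, q j ≤ ∑ j ∈ O \ B, q j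
  · refine ⟨A, hAO, le_min (by linarith) ?_, hA₂⟩
    rw [sum_sdiff_eq_sub hBO] at hAB
    linarith
  · refine ⟨O \ B, sdiff_subset, le_min (by linarith) ?_, by
      rwa [Finset.sdiff_sdiff_eq_self hBO]⟩
    rw [sum_sdiff_eq_sub hBO]
    linarith

end Knapsack

theorem stmt6_general {J : Type*} [DecidableEq J] (F O : Finset J) (p q : J → ℝ)
    (hdisj : Disjoint F O)
    (hp : ∀ j ∈ F, 0 < p j) (hq : ∀ j ∈ O, 0 < q j)
    (hF : F.Nonempty) (hO : O.Nonempty)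
    (hpq : O.sup' hO q ≤ F.sup' hF p)
    (hQO : F.sup' hF p < ∑ j ∈ O, q j)
    (OPT1 OPT2 : ℝ)
    (hOPT1 : IsLeast {x : ℝ | ∃ X ⊆ O, x = (∑ j ∈ X, q j) ∧ F.sup' hF p < x} OPT1)
    (hOPT2 : IsGreatest {x : ℝ | ∃ Y ⊆ O, x = (∑ j ∈ Y, q j) ∧ x ≤ F.sup' hF p} OPT2)
    (ε : ℝ) (hε : 0 < ε)
    (A : Finset J) (hAO : A ⊆ O)
    (hA1 : (∑ j ∈ A, q j) ≤ (1 + ε) * OPT1)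
    (hA2 : (∑ j ∈ O \ A, q j) ≤ F.sup' hF p - ε * OPT1)
    (B : Finset J) (hBO : B ⊆ O)
    (hB1 : (∑ j ∈ B, q j) ≤ F.sup' hF p)
    (hB2 : (1 - ε) * OPT2 ≤ ∑ j ∈ B, q j) :
    ∃ π : J → Fin 3 → ℝ, Feasible F O p q π ∧
      ∀ σ : J → Fin 3 → ℝ, Feasible F O p q σ →
        makespan F O p q π < (1 + ε) * makespan F O p q σ := by
  obtain ⟨a, ha, hpa⟩ := exists_mem_eq_sup' hF p
  set pm := F.sup' hF p
  set P := ∑ j ∈ F, p j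
  set Q := ∑ j ∈ O, q j
  have hp0 : ∀ j ∈ F, 0 ≤ p j := fun j hj => (hp j hj).le
  have hq0 : ∀ j ∈ O, 0 ≤ q j := fun j hj => (hq j hj).le
  have hpmOPT1 : pm < OPT1 := by obtain ⟨X, -, rfl, h⟩ := hOPT1.1; exact h
  have hOPT2pm : OPT2 ≤ pm := by obtain ⟨Y, -, rfl, h⟩ := hOPT2.1; exact h
  have hεOPT1 : 0 ≤ ε * OPT1 := mul_nonneg hε.le (by linarith [hp a ha])
  obtain ⟨X, hXO, hX, hOX⟩ := exists_subset_sum_le_of_approx hε.le (hOPT2pm.trans hpmOPT1.le)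
    hAO hA1 (by linarith) hBO hB1 hB2
  obtain ⟨π, hπ, hπU⟩ := exists_feasible_makespan_le hdisj hp0 hq0 hXO
    (fun j hj => le_sup' p hj) (fun j hj => (le_sup' q hj).trans hpq)
    (by rw [hpa]; exact single_le_sum hp0 ha)
  refine ⟨π, hπ, fun σ hσ => ?_⟩
  obtain ⟨Y, hYO, hσY⟩ := hσ.exists_makespan_lower_bounds hdisj hp0 hq0 ha
  rw [← hpa] at hσY
  have hm := min_le_max_sum_sum_sdiff hOPT1.2 hOPT2.2 hYO
  have hPQ := hσ.sum_add_sum_le_makespan hdisj hp0 hq0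
  have hOPT1Q : OPT1 ≤ Q := hOPT1.2 ⟨O, subset_rfl, rfl, hQO⟩
  have hP : 0 < P := sum_pos hp hF
  have hXY : max pm (max (∑ j ∈ X, q j) (∑ j ∈ O \ X, q j)) ≤
      max pm (max (∑ j ∈ Y, q j) (∑ j ∈ O \ Y, q j)) + ε * OPT1 := by
    have := le_max_left pm (max (∑ j ∈ Y, q j) (∑ j ∈ O \ Y, q j))
    have := hm.trans (le_max_right pm (max (∑ j ∈ Y, q j) (∑ j ∈ O \ Y, q j)))
    exact max_le (by linarith) (max_le (by linarith) (by linarith))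
  calc makespan F O p q π ≤ makespan F O p q σ + ε * OPT1 :=
        hπU.trans (max_le (by linarith) (by linarith))
    _ < (1 + ε) * makespan F O p q σ := by nlinarith

/-- Lemma 3.5 (together with Lemma 3.1): if `p_max ≥ q_max`, `Q(O) > p_max`, `ε > 0`,
`A ⊆ O` is a `(1+ε)`-approximate Min-Knapsack solution with `Q(O \ A) ≤ p_max − ε·OPT1`,
and `B ⊆ O` is a `(1−ε)`-approximate Max-Knapsack solution, then there is a feasible
schedule whose makespan is within a factor `1 + ε` of the optimum. -/
theorem stmt6 {J : Type*} [DecidableEq J] (F O : Finset J) (p q : J → ℝ)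
    (hdisj : Disjoint F O)
    (hp : ∀ j ∈ F, 0 < p j) (hq : ∀ j ∈ O, 0 < q j)
    (hF : F.Nonempty) (hO : O.Nonempty)
    (hpq : O.sup' hO q ≤ F.sup' hF p)
    (hQO : F.sup' hF p < ∑ j ∈ O, q j)
    (OPT1 OPT2 : ℝ)
    (hOPT1 : IsLeast {x : ℝ | ∃ X ⊆ O, x = (∑ j ∈ X, q j) ∧ F.sup' hF p < x} OPT1)
    (hOPT2 : IsGreatest {x : ℝ | ∃ Y ⊆ O, x = (∑ j ∈ Y, q j) ∧ x ≤ F.sup' hF p} OPT2)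
    (ε : ℝ) (hε : 0 < ε)
    (A : Finset J) (hAO : A ⊆ O)
    (hA0 : F.sup' hF p < ∑ j ∈ A, q j)
    (hA1 : (∑ j ∈ A, q j) ≤ (1 + ε) * OPT1)
    (hA2 : (∑ j ∈ O \ A, q j) ≤ F.sup' hF p - ε * OPT1)
    (B : Finset J) (hBO : B ⊆ O)
    (hB1 : (∑ j ∈ B, q j) ≤ F.sup' hF p)
    (hB2 : (1 - ε) * OPT2 ≤ ∑ j ∈ B, q j) :
    ∃ π : J → Fin 3 → ℝ, Feasible F O p q π ∧
      ∀ σ : J → Fin 3 → ℝ, Feasible F O p q σ →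
        makespan F O p q π < (1 + ε) * makespan F O p q σ :=
  stmt6_general F O p q hdisj hp hq hF hO hpq hQO OPT1 OPT2 hOPT1 hOPT2 ε hε A hAO hA1 hA2 B hBO hB1
    hB2
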